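/- The function Φ : ℝ^n → ℝ defined by Φ(w) = Σ_{j=1}^n ( −ν_j w_j − ∫_{Vor_w(j)} (‖x − y_j‖ − w_j) dμ(x) ) attains a global minimum: there exists w* ∈ ℝ^n with Φ(w*) = inf_{w∈ℝ^n} Φ(w). -/

import Mathlib

/-!
Writing `w^c(x) = minₖ (‖x - yₖ‖ - wₖ)`, the integrand on `Vor_w(j)` is exactly `w^c`. Two cells
meet only inside a level set of `x ↦ ‖x - yⱼ‖ - ‖x - yₖ‖`, which is Lebesgue-null when `d ≥ 2`:
after a rigid motion putting `yⱼ, yₖ` on the first axis, this function is strictly increasing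
along every line parallel to that axis which avoids it, so Fubini applies. Hence for
`μ ≪ Lebesgue` the cells tile `ℝ^d` up to null sets and `Φ(w) = -∑ νⱼ wⱼ - ∫ w^c dμ`.

In this form `Φ` is continuous (`w ↦ w^c(x)` is 1-Lipschitz for the sup norm) and invariant
under `w ↦ w - M` since `∑ νⱼ = 1`, so we may normalise `maxⱼ wⱼ = 0`. Then
`Φ(w) ≥ νⱼ (-wⱼ) - ∫ ‖x - y_{j₀}‖ dμ` for each `j`, so a normalised `w` with `Φ(w) ≤ Φ(0)` lies in
a fixed box `[-R, 0]ⁿ`, and a minimiser of `Φ` on that compact box is a global minimiser.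
-/

open MeasureTheory ENNReal

noncomputable section

/-- The additively weighted Voronoi cell of the site `y j` with weights `w`. -/
def Vor {d n : ℕ} (y : Fin n → EuclideanSpace ℝ (Fin d)) (w : Fin n → ℝ) (j : Fin n) :
    Set (EuclideanSpace ℝ (Fin d)) :=
  {x | ∀ k, k ≠ j → ‖x - y j‖ - w j ≤ ‖x - y k‖ - w k}

section LevelSet

theorem strictMono_div_sqrt_sq_add {A : ℝ} (hA : 0 < A) :
    StrictMono fun u : ℝ => u / √(u ^ 2 + A) := by
  have hpos : ∀ u : ℝ, 0 < √(u ^ 2 + A) := fun u => Real.sqrt_pos.2 (by positivity)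
  have hnonneg : ∀ u v : ℝ, 0 ≤ u → u < v → u / √(u ^ 2 + A) < v / √(v ^ 2 + A) := by
    intro u v hu huv
    rw [div_lt_div_iff₀ (hpos u) (hpos v)]
    refine lt_of_pow_lt_pow_left₀ 2 (by positivity [hu.trans huv.le]) ?_
    rw [mul_pow, mul_pow, Real.sq_sqrt (by positivity), Real.sq_sqrt (by positivity)]
    nlinarith [mul_pos hA (by nlinarith : 0 < v ^ 2 - u ^ 2)]
  intro u v huv
  rcases le_or_gt 0 u with hu | hu
  · exact hnonneg u v hu huv
  rcases le_or_gt v 0 with hv | hv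
  · simpa [neg_div, neg_sq] using hnonneg (-v) (-u) (by linarith) (by linarith)
  · exact (div_neg_of_neg_of_pos hu (hpos u)).trans (div_pos hv (hpos v))

theorem hasDerivAt_sqrt_sub_sq_add {A : ℝ} (hA : 0 < A) (c t : ℝ) :
    HasDerivAt (fun t => √((t - c) ^ 2 + A)) ((t - c) / √((t - c) ^ 2 + A)) t := by
  have hsq : HasDerivAt (fun t => (t - c) ^ 2 + A) (2 * (t - c)) t := by
    simpa using (((hasDerivAt_id' t).sub_const c).pow 2).add_const A
  convert hsq.sqrt (by positivity) using 1
  field_simp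

theorem strictMono_sqrt_sq_add_sub_sqrt_sub_sq_add {A s : ℝ} (hA : 0 < A) (hs : 0 < s) :
    StrictMono fun t : ℝ => √(t ^ 2 + A) - √((t - s) ^ 2 + A) := by
  refine strictMono_of_deriv_pos fun t => ?_
  have hderiv : HasDerivAt (fun t => √(t ^ 2 + A) - √((t - s) ^ 2 + A))
      (t / √(t ^ 2 + A) - (t - s) / √((t - s) ^ 2 + A)) t := by
    simpa only [sub_zero] using
      (hasDerivAt_sqrt_sub_sq_add hA 0 t).fun_sub (hasDerivAt_sqrt_sub_sq_add hA s t)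
  rw [hderiv.deriv, sub_pos]
  exact strictMono_div_sqrt_sq_add hA (sub_lt_self t hs)

theorem volume_setOf_sqrt_sub_sqrt_eq_zero {ι : Type*} [Fintype ι] [Nonempty ι]
    {s : ℝ} (hs : 0 < s) (c : ℝ) :
    volume {p : ℝ × (ι → ℝ) |
      √(p.1 ^ 2 + ∑ i, p.2 i ^ 2) - √((p.1 - s) ^ 2 + ∑ i, p.2 i ^ 2) = c} = 0 := by
  have hmeas : MeasurableSet {p : ℝ × (ι → ℝ) |
      √(p.1 ^ 2 + ∑ i, p.2 i ^ 2) - √((p.1 - s) ^ 2 + ∑ i, p.2 i ^ 2) = c} :=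
    measurableSet_eq_fun (by fun_prop) measurable_const
  rw [Measure.volume_eq_prod, Measure.prod_apply_symm hmeas]
  refine (lintegral_congr_ae ?_).trans lintegral_zero
  filter_upwards [Measure.ae_ne volume 0] with z hz
  have hA : 0 < ∑ i, z i ^ 2 := by
    refine lt_of_le_of_ne (by positivity) fun h => hz ?_
    ext i
    simpa using (Finset.sum_eq_zero_iff_of_nonneg (fun i _ => sq_nonneg (z i))).1 h.symm i
  refine Set.Subsingleton.measure_zero (fun t₁ h₁ t₂ h₂ => ?_) volume
  exact (strictMono_sqrt_sq_add_sub_sqrt_sub_sq_add hA hs).injective (Eq.trans h₁ h₂.symm)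

theorem EuclideanSpace.volume_setOf_norm_sub_norm_sub_smul_single_eq_zero {k : ℕ} [NeZero k]
    {s : ℝ} (hs : 0 < s) (c : ℝ) :
    volume {x : EuclideanSpace ℝ (Fin (k + 1)) |
      ‖x‖ - ‖x - s • EuclideanSpace.single 0 1‖ = c} = 0 := by
  let e := (MeasurableEquiv.toLp 2 (Fin (k + 1) → ℝ)).symm.trans
    (MeasurableEquiv.piFinSuccAbove (fun _ => ℝ) 0)
  have he : MeasurePreserving e :=
    (EuclideanSpace.volume_preserving_symm_measurableEquiv_toLp _).trans
      (volume_preserving_piFinSuccAbove (fun _ => ℝ) 0)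
  rw [← volume_setOf_sqrt_sub_sqrt_eq_zero (ι := Fin k) hs c, ← he.measure_preimage_equiv]
  congr 1
  ext x
  simp [e, EuclideanSpace.norm_eq, Fin.sum_univ_succ, Fin.tail]

theorem volume_setOf_norm_sub_sub_norm_sub_eq_zero {E : Type*} [NormedAddCommGroup E]
    [InnerProductSpace ℝ E] [FiniteDimensional ℝ E] [MeasurableSpace E] [BorelSpace E]
    (hE : 2 ≤ Module.finrank ℝ E) {a b : E} (hab : a ≠ b) (c : ℝ) :
    volume {x : E | ‖x - a‖ - ‖x - b‖ = c} = 0 := by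
  obtain ⟨k, hk⟩ : ∃ k, Module.finrank ℝ E = k + 1 :=
    ⟨_, (Nat.succ_pred_eq_of_pos (by omega)).symm⟩
  have : NeZero k := ⟨by omega⟩
  set s := ‖b - a‖
  let e : EuclideanSpace ℝ (Fin (k + 1)) := s • EuclideanSpace.single 0 1
  let T := ((stdOrthonormalBasis ℝ E).reindex (finCongr hk)).repr
  let L := T.trans (ℝ ∙ (T (b - a) - e))ᗮ.reflection
  have hL : L (b - a) = e := Submodule.reflection_sub (by simp [e, s, norm_smul, -map_sub])
  have hpre : {x : E | ‖x - a‖ - ‖x - b‖ = c} =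
      (fun x => x + -a) ⁻¹' (L ⁻¹' {x | ‖x‖ - ‖x - e‖ = c}) := by
    ext x
    simp only [Set.mem_preimage, Set.mem_ofPred_eq, ← hL, ← map_sub,
      LinearIsometryEquiv.norm_map]
    rw [← sub_eq_add_neg, sub_sub_sub_cancel_right]
  rw [hpre, measure_preimage_add_right, L.measurePreserving.measure_preimage
    (measurableSet_eq_fun (by fun_prop) measurable_const).nullMeasurableSet]
  exact EuclideanSpace.volume_setOf_norm_sub_norm_sub_smul_single_eq_zero
    (norm_pos_iff.2 (sub_ne_zero.2 hab.symm)) c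

end LevelSet

theorem integrable_norm_sub {E : Type*} [NormedAddCommGroup E] [MeasurableSpace E]
    [OpensMeasurableSpace E] {μ : Measure E} [IsFiniteMeasure μ] (hμ : Integrable (‖·‖) μ)
    (z : E) : Integrable (fun x => ‖x - z‖) μ :=
  (hμ.add (integrable_const ‖z‖)).mono' (by fun_prop : Continuous _).aestronglyMeasurable <|
    .of_forall fun x => by simpa only [norm_norm, Pi.add_apply] using norm_sub_le x z

section CTransform

variable {ι E : Type*} [NormedAddCommGroup E]

/-- The `c`-transform `w^c` of the weights `w` for the cost `c(x, y) = ‖x - y‖`. -/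
def cTransform (y : ι → E) (w : ι → ℝ) (x : E) : ℝ :=
  ⨅ k, (‖x - y k‖ - w k)

variable (y : ι → E)

theorem le_cTransform [Nonempty ι] {w : ι → ℝ} {x : E} {r : ℝ}
    (h : ∀ k, r ≤ ‖x - y k‖ - w k) : r ≤ cTransform y w x :=
  le_ciInf h

variable [Fintype ι]

theorem cTransform_le (w : ι → ℝ) (x : E) (k : ι) : cTransform y w x ≤ ‖x - y k‖ - w k :=
  ciInf_le (Finite.bddBelow_range _) k

variable [Nonempty ι]

theorem exists_cTransform_eq (w : ι → ℝ) (x : E) : ∃ k, ‖x - y k‖ - w k = cTransform y w x :=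
  exists_eq_ciInf_of_finite

theorem cTransform_sub_const (w : ι → ℝ) (M : ℝ) (x : E) :
    cTransform y (fun k => w k - M) x = cTransform y w x + M := by
  rw [cTransform, cTransform, ciInf_add (Finite.bddBelow_range _)]
  simp only [sub_sub_eq_add_sub, add_sub_right_comm]

theorem continuous_cTransform (w : ι → ℝ) : Continuous (cTransform y w) := by
  have h := Continuous.finset_inf'_apply (f := fun k x => ‖x - y k‖ - w k)
    Finset.univ_nonempty fun k _ => by fun_prop
  simp only [Finset.inf'_univ_eq_ciInf] at h
  exact h

theorem lipschitzWith_cTransform (x : E) : LipschitzWith 1 fun w => cTransform y w x := by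
  refine LipschitzWith.of_le_add fun w w' => ?_
  obtain ⟨k, hk⟩ := exists_cTransform_eq y w' x
  have hwk : w' k - w k ≤ dist w w' := by
    simpa [Real.dist_eq, dist_comm w] using (le_abs_self _).trans (dist_le_pi_dist w' w k)
  linarith [cTransform_le y w x k]

variable [MeasurableSpace E] [OpensMeasurableSpace E] {μ : Measure E} [IsFiniteMeasure μ]

theorem integrable_cTransform (hμ : Integrable (‖·‖) μ) (w : ι → ℝ) :
    Integrable (cTransform y w) μ := by
  obtain ⟨k⟩ := ‹Nonempty ι›
  refine integrable_of_le_of_le (continuous_cTransform y w).aestronglyMeasurable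
    (.of_forall fun x => le_cTransform y fun j => ?_) (.of_forall fun x => cTransform_le y w x k)
    (integrable_const (-‖w‖)) ((integrable_norm_sub hμ (y k)).sub (integrable_const (w k)))
  have := (Real.norm_eq_abs _ ▸ norm_le_pi_norm w j : |w j| ≤ ‖w‖)
  linarith [le_abs_self (w j), norm_nonneg (x - y j)]

theorem continuous_integral_cTransform (hμ : Integrable (‖·‖) μ) :
    Continuous fun w : ι → ℝ => ∫ x, cTransform y w x ∂μ := by
  refine LipschitzWith.continuous (K := (μ Set.univ).toNNReal) <|
    LipschitzWith.of_dist_le_mul fun w w' => ?_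
  rw [dist_eq_norm, ← integral_sub (integrable_cTransform y hμ w) (integrable_cTransform y hμ w'),
    mul_comm]
  refine norm_integral_le_of_norm_le_const (.of_forall fun x => ?_)
  simpa [← Real.dist_eq] using (lipschitzWith_cTransform y x).dist_le_mul w w'

end CTransform

section DualFunctional

variable {ι E : Type*} [Fintype ι] [NormedAddCommGroup E] [MeasurableSpace E]
  [OpensMeasurableSpace E] {μ : Measure E} {y : ι → E} {a : ι → ℝ}

variable (μ y a) in
def dualFunctional (w : ι → ℝ) : ℝ :=
  -(∑ j, a j * w j) - ∫ x, cTransform y w x ∂μ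

variable [Nonempty ι]

theorem continuous_dualFunctional [IsFiniteMeasure μ] (hμ : Integrable (‖·‖) μ) :
    Continuous (dualFunctional μ y a) :=
  (by fun_prop : Continuous fun w : ι → ℝ => ∑ j, a j * w j).neg.sub
    (continuous_integral_cTransform y hμ)

variable [IsProbabilityMeasure μ]

theorem dualFunctional_sub_const (hμ : Integrable (‖·‖) μ) (hsum : ∑ j, a j = 1)
    (w : ι → ℝ) (M : ℝ) : dualFunctional μ y a (fun j => w j - M) = dualFunctional μ y a w := by
  simp only [dualFunctional, cTransform_sub_const, mul_sub, Finset.sum_sub_distrib,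
    ← Finset.sum_mul, hsum, one_mul]
  rw [integral_add (integrable_cTransform y hμ w) (integrable_const M)]
  simp only [integral_const, probReal_univ, one_smul]
  ring

theorem mul_sub_sub_integral_le_dualFunctional (hμ : Integrable (‖·‖) μ) (ha : ∀ j, 0 ≤ a j)
    (hsum : ∑ j, a j = 1) {w : ι → ℝ} {j₀ : ι} (hj₀ : ∀ j, w j ≤ w j₀) (j : ι) :
    a j * (w j₀ - w j) - ∫ x, ‖x - y j₀‖ ∂μ ≤ dualFunctional μ y a w := by
  have hsum_mul : ∑ k, a k * (w j₀ - w k) = w j₀ - ∑ k, a k * w k := by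
    simp only [mul_sub, Finset.sum_sub_distrib, ← Finset.sum_mul, hsum, one_mul]
  have hterm : a j * (w j₀ - w j) ≤ ∑ k, a k * (w j₀ - w k) :=
    Finset.single_le_sum (f := fun k => a k * (w j₀ - w k))
      (fun k _ => mul_nonneg (ha k) (sub_nonneg.2 (hj₀ k))) (Finset.mem_univ j)
  have hint : ∫ x, cTransform y w x ∂μ ≤ ∫ x, ‖x - y j₀‖ ∂μ - w j₀ := by
    calc ∫ x, cTransform y w x ∂μ ≤ ∫ x, (‖x - y j₀‖ - w j₀) ∂μ :=
          integral_mono (integrable_cTransform y hμ w)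
            ((integrable_norm_sub hμ _).sub (integrable_const _)) fun x => cTransform_le y w x j₀
      _ = ∫ x, ‖x - y j₀‖ ∂μ - w j₀ := by
          rw [integral_sub (integrable_norm_sub hμ _) (integrable_const _)]
          simp only [integral_const, probReal_univ, one_smul]
  rw [dualFunctional]
  linarith

theorem exists_forall_dualFunctional_le (hμ : Integrable (‖·‖) μ) (ha : ∀ j, 0 < a j)
    (hsum : ∑ j, a j = 1) : ∃ w₀, ∀ w, dualFunctional μ y a w₀ ≤ dualFunctional μ y a w := by
  set Φ := dualFunctional μ y a
  have hbound {w : ι → ℝ} {j₀ : ι} (hj₀ : ∀ j, w j ≤ w j₀) (j : ι) :=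
    mul_sub_sub_integral_le_dualFunctional (y := y) hμ (fun j => (ha j).le) hsum hj₀ j
  obtain ⟨jm, hjm⟩ := Finite.exists_min a
  obtain ⟨jC, hjC⟩ := Finite.exists_max fun j => ∫ x, ‖x - y j‖ ∂μ
  set C := ∫ x, ‖x - y jC‖ ∂μ
  set R := (Φ 0 + C) / a jm
  have hR : 0 ≤ R := by
    have := hbound (w := 0) (j₀ := jC) (fun _ => le_rfl) jC
    exact div_nonneg (by simp only [Pi.zero_apply, sub_self, mul_zero] at this; linarith)
      (ha jm).le
  set K := Set.Icc (fun _ : ι => -R) 0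
  have h0 : 0 ∈ K := ⟨fun _ => neg_nonpos.2 hR, le_rfl⟩
  obtain ⟨w₀, -, hw₀⟩ := isCompact_Icc.exists_isMinOn ⟨0, h0⟩
    (continuous_dualFunctional (y := y) (a := a) hμ).continuousOn
  refine ⟨w₀, fun w => ?_⟩
  obtain ⟨j₀, hj₀⟩ := Finite.exists_max w
  set w' := fun j => w j - w j₀
  rw [← show Φ w' = Φ w from dualFunctional_sub_const hμ hsum w (w j₀)]
  by_cases hw' : w' ∈ K
  · exact hw₀ hw'
  obtain ⟨j, hj⟩ : ∃ j, w' j < -R := by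
    by_contra! h
    exact hw' ⟨h, fun j => sub_nonpos.2 (hj₀ j)⟩
  calc Φ w₀ ≤ Φ 0 := hw₀ h0
    _ = a jm * R - C := by rw [mul_div_cancel₀ _ (ha jm).ne']; ring
    _ ≤ a j * (w' j₀ - w' j) - ∫ x, ‖x - y j₀‖ ∂μ := by
        have : R ≤ w' j₀ - w' j := by simp only [w', sub_self]; linarith
        linarith [mul_le_mul (hjm j) this hR (ha j).le, hjC j₀]
    _ ≤ Φ w' := hbound (fun j => sub_le_sub_right (hj₀ j) _) j

end DualFunctional

section Voronoi

variable {d n : ℕ} (y : Fin n → EuclideanSpace ℝ (Fin d)) (w : Fin n → ℝ)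

theorem measurableSet_Vor (j : Fin n) : MeasurableSet (Vor y w j) := by
  simp only [Vor, Set.ofPred_forall]
  exact .iInter fun k => .iInter fun _ => measurableSet_le (by fun_prop) (by fun_prop)

theorem mem_Vor_iff_eq_cTransform {j : Fin n} {x : EuclideanSpace ℝ (Fin d)} :
    x ∈ Vor y w j ↔ ‖x - y j‖ - w j = cTransform y w x := by
  have : Nonempty (Fin n) := ⟨j⟩
  refine ⟨fun hx => le_antisymm (le_cTransform y fun k => ?_) (cTransform_le y w x j),
    fun hx k _ => hx ▸ cTransform_le y w x k⟩
  rcases eq_or_ne k j with rfl | hkj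
  · exact le_rfl
  · exact hx k hkj

theorem iUnion_Vor [NeZero n] : ⋃ j, Vor y w j = Set.univ :=
  Set.eq_univ_of_forall fun x => Set.mem_iUnion.2 <|
    (exists_cTransform_eq y w x).imp fun _ hj => (mem_Vor_iff_eq_cTransform y w).2 hj

variable {μ : Measure (EuclideanSpace ℝ (Fin d))}

theorem pairwise_aedisjoint_Vor (hd : 2 ≤ d) (hac : μ ≪ volume) (hy : Function.Injective y) :
    Pairwise (Function.onFun (AEDisjoint μ) (Vor y w)) := by
  intro j k hjk
  refine measure_mono_null (fun x hx => ?_) (hac (volume_setOf_norm_sub_sub_norm_sub_eq_zero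
    (by simpa using hd) (hy.ne hjk) (w j - w k)))
  have hj := (mem_Vor_iff_eq_cTransform y w).1 hx.1
  have hk := (mem_Vor_iff_eq_cTransform y w).1 hx.2
  show ‖x - y j‖ - ‖x - y k‖ = w j - w k
  linarith

theorem sum_setIntegral_Vor [NeZero n] [IsFiniteMeasure μ] (hd : 2 ≤ d) (hac : μ ≪ volume)
    (hμ : Integrable (‖·‖) μ) (hy : Function.Injective y) :
    ∑ j, ∫ x in Vor y w j, (‖x - y j‖ - w j) ∂μ = ∫ x, cTransform y w x ∂μ := by
  calc ∑ j, ∫ x in Vor y w j, (‖x - y j‖ - w j) ∂μ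
      = ∑ j, ∫ x in Vor y w j, cTransform y w x ∂μ :=
        Finset.sum_congr rfl fun j _ => setIntegral_congr_fun (measurableSet_Vor y w j)
          fun _ hx => (mem_Vor_iff_eq_cTransform y w).1 hx
    _ = ∫ x in ⋃ j, Vor y w j, cTransform y w x ∂μ := by
        rw [integral_iUnion_ae (fun j => (measurableSet_Vor y w j).nullMeasurableSet)
          (pairwise_aedisjoint_Vor y w hd hac hy) (integrable_cTransform y hμ w).integrableOn,
          tsum_fintype]
    _ = ∫ x, cTransform y w x ∂μ := by rw [iUnion_Vor, setIntegral_univ]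

end Voronoi

/-- The function
`Φ(w) = ∑ⱼ ( -νⱼ wⱼ - ∫_{Vor_w(j)} (‖x - yⱼ‖ - wⱼ) dμ(x) )` attains a global
minimum on `ℝⁿ`. -/
theorem Phi_attains_minimum
    {d n : ℕ} (hd : 2 ≤ d)
    (μ : Measure (EuclideanSpace ℝ (Fin d))) [IsProbabilityMeasure μ]
    (hac : μ ≪ volume)
    (hμint : Integrable (fun x => ‖x‖) μ)
    (y : Fin n → EuclideanSpace ℝ (Fin d)) (hy : Function.Injective y)
    (a : Fin n → ℝ) (ha : ∀ j, a j ∈ Set.Ioc (0 : ℝ) 1) (hsum : ∑ j, a j = 1) :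
    ∃ wstar : Fin n → ℝ, ∀ w : Fin n → ℝ,
      ∑ j, (-(a j * wstar j) - ∫ x in Vor y wstar j, (‖x - y j‖ - wstar j) ∂μ) ≤
        ∑ j, (-(a j * w j) - ∫ x in Vor y w j, (‖x - y j‖ - w j) ∂μ) := by
  have : NeZero n := ⟨by rintro rfl; simp at hsum⟩
  have hΦ (w : Fin n → ℝ) : ∑ j, (-(a j * w j) - ∫ x in Vor y w j, (‖x - y j‖ - w j) ∂μ) =
      dualFunctional μ y a w := by
    rw [Finset.sum_sub_distrib, Finset.sum_neg_distrib, sum_setIntegral_Vor y w hd hac hμint hy,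
      dualFunctional]
  obtain ⟨w₀, hw₀⟩ := exists_forall_dualFunctional_le (y := y) hμint (fun j => (ha j).1) hsum
  exact ⟨w₀, fun w => by simpa only [hΦ] using hw₀ w⟩
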